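/- arXiv:2208.02327 — 6 statements merged into one kernel-verified Lean document; each statement's English description precedes it below -/
import Mathlib

section
/- Suppose x : A → {0,1} satisfies ∑_{i:(i,j)∈A} x(i,j) = 1 for every j ≠ r, and d : V → ℝ≥0, z : A → ℝ≥0 satisfy z(i,j) ≤ d(i) and z(i,j) ≤ M·x(i,j) for all (i,j)∈A (where M ≥ max_i d(i)), together with d(j) ≥ d(i) − M + (M + c(i,j))·x(i,j) for all arcs. Then for every j ≠ r the valid inequality ∑_{i:(i,j)∈A} z(i,j) ≤ d(j) − ∑_{i:(i,j)∈A} c(i,j)·x(i,j) holds. -/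
/-- Proposition 4 of the paper: validity of inequalities (44) of the
Adjusted Arc-Cost model. -/
theorem stmt2 {V : Type*} [Fintype V] [DecidableEq V]
    (A : Finset (V × V)) (r : V) (x z c : V × V → ℝ) (d : V → ℝ) (M : ℝ)
    (hx : ∀ a ∈ A, x a = 0 ∨ x a = 1)
    (hsum : ∀ j : V, j ≠ r → ∑ a ∈ A.filter (fun a => a.2 = j), x a = 1)
    (hd0 : ∀ i : V, 0 ≤ d i) (hz0 : ∀ a, 0 ≤ z a) (hc : ∀ a, 0 ≤ c a)
    (hM : ∀ i : V, d i ≤ M)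
    (hz1 : ∀ a ∈ A, z a ≤ d a.1)
    (hz2 : ∀ a ∈ A, z a ≤ M * x a)
    (hdc : ∀ a ∈ A, d a.2 ≥ d a.1 - M + (M + c a) * x a) :
    ∀ j : V, j ≠ r →
      ∑ a ∈ A.filter (fun a => a.2 = j), z a ≤
        d j - ∑ a ∈ A.filter (fun a => a.2 = j), c a * x a := by
  intro j hj
  have hS := hsum j hj
  have key : ∀ a ∈ A.filter (fun a => a.2 = j), z a + c a * x a ≤ d j * x a := by
    intro a ha
    simp only [Finset.mem_filter] at ha
    obtain ⟨haA, haj⟩ := ha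
    rcases hx a haA with h0 | h1
    · have := hz2 a haA
      simp only [h0, mul_zero] at this ⊢
      linarith [hz0 a]
    · have := hdc a haA
      rw [haj] at this
      simp only [h1, mul_one] at this ⊢
      linarith [hz1 a haA]
  have hsum' := Finset.sum_le_sum key
  rw [Finset.sum_add_distrib, ← Finset.mul_sum, hS] at hsum'
  linarith
end

section
/- Let T be a spanning arborescence of G=(V,A) rooted at r that is precedence-feasible with respect to R (for every (s,t)∈R, t does not lie on the path from r to s in T). Then the indicator x of T satisfies, for every j ≠ r and every S ⊆ V_j∖{r} with j ∈ S, the inequality ∑_{(i,k)∈A : i∈V_j∖S, k∈S} x(i,k) ≥ 1, where V_j = {i ∈ V : (j,i) ∉ R}. -/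
/-! The `r → j` path of `T` starts outside `S` and ends in `S`, so one of its arcs enters `S`.
Its tail lies on the path, hence is not a successor of `j` by precedence-feasibility. -/

def IsPathIn {V : Type*} (T : Set (V × V)) (r j : V) (p : List V) : Prop :=
  p.head? = some r ∧ p.getLast? = some j ∧ p.Chain' (fun a b => (a, b) ∈ T)

def IsSpanningArborescence {V : Type*} (T : Set (V × V)) (r : V) : Prop :=
  (∀ j : V, j ≠ r → ∃! i : V, (i, j) ∈ T) ∧ (∀ i : V, (i, r) ∉ T) ∧
    ∀ j : V, ∃! p : List V, IsPathIn T r j p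

theorem List.IsChain.exists_rel_notMem_mem {α : Type*} {R : α → α → Prop} {S : Set α} :
    ∀ {p : List α}, p.IsChain R → ∀ {a b : α}, p.head? = some a → p.getLast? = some b →
      a ∉ S → b ∈ S → ∃ x y, R x y ∧ x ∉ S ∧ y ∈ S ∧ x ∈ p
  | [], _, _, _, ha, _, _, _ => by simp at ha
  | [x], _, _, _, ha, hb, haS, hbS => by
    simp only [List.head?_cons, List.getLast?_singleton, Option.some.injEq] at ha hb
    exact absurd (ha ▸ hb ▸ hbS) haS
  | x :: y :: p, hp, a, b, ha, hb, haS, hbS => by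
    obtain ⟨hxy, hp⟩ := List.isChain_cons_cons.mp hp
    obtain rfl : x = a := by simpa using ha
    by_cases hy : y ∈ S
    · exact ⟨x, y, hxy, haS, hy, List.mem_cons_self⟩
    · obtain ⟨u, v, huv, huS, hvS, hu⟩ :=
        hp.exists_rel_notMem_mem rfl (by simpa [List.getLast?_cons_cons] using hb) hy hbS
      exact ⟨u, v, huv, huS, hvS, List.mem_cons_of_mem _ hu⟩

/-- the connectivity inequalities (3) of the Set-Based model are
valid for (the indicator of) every precedence-feasible spanning arborescence. -/
theorem stmt5 {V : Type*} [Fintype V] [DecidableEq V]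
    (A T : Finset (V × V)) (R : Finset (V × V)) (r : V)
    (hT : T ⊆ A)
    (harb : IsSpanningArborescence (↑T) r)
    (hfeas : ∀ q ∈ R, ∀ p : List V, IsPathIn (↑T) r q.1 p → q.2 ∉ p) :
    ∀ j : V, j ≠ r → ∀ S : Finset V,
      S ⊆ (Finset.univ.filter (fun i => (j, i) ∉ R)).erase r → j ∈ S →
      1 ≤ ∑ a ∈ A.filter (fun a =>
            a.1 ∈ Finset.univ.filter (fun i => (j, i) ∉ R) ∧ a.1 ∉ S ∧ a.2 ∈ S),
          (if a ∈ T then (1 : ℝ) else 0) := by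
  intro j _ S hS hjS
  obtain ⟨p, hp, -⟩ := harb.2.2 j
  have hrS : r ∉ S := fun hr => (Finset.mem_erase.mp (hS hr)).1 rfl
  obtain ⟨a, b, hab, haS, hbS, hap⟩ :=
    hp.2.2.exists_rel_notMem_mem hp.1 hp.2.1 hrS (Finset.mem_coe.mpr hjS)
  have haR : (j, a) ∉ R := fun hR => hfeas (j, a) hR p hp hap
  have hcut : (a, b) ∈ A.filter (fun e =>
      e.1 ∈ Finset.univ.filter (fun i => (j, i) ∉ R) ∧ e.1 ∉ S ∧ e.2 ∈ S) :=
    Finset.mem_filter.mpr ⟨hT hab, Finset.mem_filter.mpr ⟨Finset.mem_univ a, haR⟩, haS, hbS⟩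
  calc (1 : ℝ) = if (a, b) ∈ T then 1 else 0 := (if_pos hab).symm
    _ ≤ _ := Finset.single_le_sum (fun _ _ => ite_nonneg zero_le_one le_rfl) hcut
end

section
/- Conversely, if x : A → {0,1} satisfies ∑_{i:(i,j)∈A} x(i,j) = 1 for every j ≠ r and, for every j ≠ r and every S ⊆ V_j∖{r} with j ∈ S, the inequality ∑_{(i,k)∈A : i∈V_j∖S, k∈S} x(i,k) ≥ 1, then the arc set T = {a ∈ A : x(a)=1} is a spanning arborescence rooted at r in which, for every (s,t) ∈ R, the vertex t does not lie on the unique path from r to s. -/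
/-!
By the degree equations every vertex other than `r` has exactly one entering arc of `T`, and no
arc enters `r`; read backwards from its end, a path from `r` is therefore forced at every step,
so it is unique. For existence, fix `j` and let `S` be the set of vertices of `V_j ∖ {r}` from
which `j` can be reached without leaving `V_j ∖ {r}`. The cut inequality for `S` yields an arc of
`T` from `V_j ∖ S` into `S`; its tail reaches `j` inside `V_j`, so by maximality of `S` it is `r`.
The result is a path from `r` to `j` inside `V_j`, which is exactly the precedence condition.
-/

namespace Finset

variable {ι : Type*} {F : Finset ι} {x : ι → ℝ}

lemma exists_eq_one_of_one_le_sum (hx : ∀ a ∈ F, x a = 0 ∨ x a = 1)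
    (h : 1 ≤ ∑ a ∈ F, x a) : ∃ a ∈ F, x a = 1 := by
  by_contra! hne
  have : ∑ a ∈ F, x a = 0 :=
    sum_eq_zero fun a ha => (hx a ha).resolve_right (hne a ha)
  linarith

lemma eq_of_eq_one_of_sum_eq_one (hx : ∀ a ∈ F, x a = 0 ∨ x a = 1)
    (h : ∑ a ∈ F, x a = 1) {a b : ι} (ha : a ∈ F) (hb : b ∈ F) (hxa : x a = 1)
    (hxb : x b = 1) : a = b := by
  by_contra hab
  have hnonneg : ∀ c ∈ F, 0 ≤ x c := fun c hc => by
    rcases hx c hc with h | h <;> simp [h]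
  have := add_le_sum hnonneg ha hb hab
  linarith

end Finset

lemma List.IsChain.eq_of_head?_eq {α : Type*} {rel : α → α → Prop} {z : α}
    (hfun : ∀ a b b', rel a b → rel a b' → b = b') (hz : ∀ b, ¬ rel z b) :
    ∀ {q q' : List α}, q.IsChain rel → q'.IsChain rel → q.getLast? = some z →
      q'.getLast? = some z → q.head? = q'.head? → q = q'
  | [], [], _, _, _, _, _ => rfl
  | [], _ :: _, _, _, _, _, h => by simp at h
  | _ :: _, [], _, _, _, _, h => by simp at h
  | [_], [_], _, _, _, _, h => by simpa using h
  | [_], _ :: b' :: _, _, hq', hl, _, h => by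
    simp only [List.getLast?_singleton, List.head?_cons, Option.some.injEq] at hl h
    subst hl h
    exact absurd (List.isChain_cons_cons.1 hq').1 (hz b')
  | _ :: b :: _, [_], hq, _, _, hl', h => by
    simp only [List.getLast?_singleton, List.head?_cons, Option.some.injEq] at hl' h
    subst hl' h
    exact absurd (List.isChain_cons_cons.1 hq).1 (hz b)
  | a :: b :: l, a' :: b' :: l', hq, hq', hl, hl', h => by
    obtain rfl : a = a' := by simpa using h
    obtain ⟨hab, hq⟩ := List.isChain_cons_cons.1 hq
    obtain ⟨hab', hq'⟩ := List.isChain_cons_cons.1 hq'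
    obtain rfl : b = b' := hfun a b b' hab hab'
    rw [List.getLast?_cons_cons] at hl hl'
    rw [eq_of_head?_eq hfun hz hq hq' hl hl' rfl]

namespace IsPathIn

variable {V : Type*} {T : Set (V × V)} {r j : V} {p p' : List V}

lemma singleton (r : V) : IsPathIn T r r [r] := ⟨rfl, rfl, List.isChain_singleton r⟩

lemma cons {i : V} (hi : (i, r) ∈ T) (hp : IsPathIn T r j p) : IsPathIn T i j (i :: p) := by
  obtain ⟨hhead, hlast, hchain⟩ := hp
  cases p with
  | nil => simp at hhead
  | cons k l =>
    obtain rfl : k = r := by simpa using hhead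
    exact ⟨rfl, by rwa [List.getLast?_cons_cons], List.IsChain.cons_cons hi hchain⟩

lemma unique (hin : ∀ i i' k, (i, k) ∈ T → (i', k) ∈ T → i = i')
    (hr : ∀ i, (i, r) ∉ T) (hp : IsPathIn T r j p) (hp' : IsPathIn T r j p') : p = p' := by
  obtain ⟨hh, hl, hc⟩ := hp
  obtain ⟨hh', hl', hc'⟩ := hp'
  refine List.reverse_injective <| List.IsChain.eq_of_head?_eq (rel := fun a b => (b, a) ∈ T)
    (fun a b b' hb hb' => hin b b' a hb hb') hr (List.isChain_reverse.2 hc)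
    (List.isChain_reverse.2 hc') ?_ ?_ ?_ <;>
  simp only [List.head?_reverse, List.getLast?_reverse, hh, hl, hh', hl']

end IsPathIn

lemma exists_isPathIn_of_cut {V : Type*} [DecidableEq V] {T : Set (V × V)} {U : Finset V}
    {r j : V} (hj : j ∈ U.erase r)
    (hcut : ∀ S ⊆ U.erase r, j ∈ S → ∃ a ∈ T, a.1 ∈ U ∧ a.1 ∉ S ∧ a.2 ∈ S) :
    ∃ p, IsPathIn T r j p ∧ ∀ v ∈ p, v ∈ U := by
  classical
  set S := (U.erase r).filter fun m => ∃ p, IsPathIn T m j p ∧ ∀ v ∈ p, v ∈ U.erase r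
  have hjS : j ∈ S := Finset.mem_filter.2 ⟨hj, [j], .singleton j, by simpa using hj⟩
  obtain ⟨⟨i, k⟩, hik, hiU, hiS, hkS⟩ := hcut S (Finset.filter_subset _ _) hjS
  obtain ⟨-, p, hp, hpU⟩ := Finset.mem_filter.1 hkS
  obtain rfl : i = r := by
    by_contra hir
    have hiU' : i ∈ U.erase r := Finset.mem_erase.2 ⟨hir, hiU⟩
    exact hiS <| Finset.mem_filter.2
      ⟨hiU', i :: p, hp.cons hik, List.forall_mem_cons.2 ⟨hiU', hpU⟩⟩
  exact ⟨i :: p, hp.cons hik,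
    List.forall_mem_cons.2 ⟨hiU, fun v hv => Finset.mem_of_mem_erase (hpU v hv)⟩⟩

/-- every integral feasible point of the Set-Based model
(constraints (2)–(4)) corresponds to a precedence-feasible spanning arborescence:
`T = {a ∈ A : x a = 1}` is a spanning arborescence rooted at `r` and for every
`(s,t) ∈ R`, `t` does not lie on the unique path from `r` to `s`. -/
theorem stmt6 {V : Type*} [Fintype V] [DecidableEq V]
    (A : Finset (V × V)) (R : Finset (V × V)) (r : V) (x : V × V → ℝ)
    (hr : ∀ i : V, (i, r) ∉ A)
    (hirr : ∀ q ∈ R, q.1 ≠ q.2)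
    (hx : ∀ a ∈ A, x a = 0 ∨ x a = 1)
    (hdeg : ∀ j : V, j ≠ r → ∑ a ∈ A.filter (fun a => a.2 = j), x a = 1)
    (hcut : ∀ j : V, j ≠ r → ∀ S : Finset V,
      S ⊆ (Finset.univ.filter (fun i => (j, i) ∉ R)).erase r → j ∈ S →
      1 ≤ ∑ a ∈ A.filter (fun a =>
            a.1 ∈ Finset.univ.filter (fun i => (j, i) ∉ R) ∧ a.1 ∉ S ∧ a.2 ∈ S), x a) :
    IsSpanningArborescence {a : V × V | a ∈ A ∧ x a = 1} r ∧
      ∀ q ∈ R, ∀ p : List V,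
        IsPathIn {a : V × V | a ∈ A ∧ x a = 1} r q.1 p → q.2 ∉ p := by
  set T : Set (V × V) := {a | a ∈ A ∧ x a = 1}
  have hx_filter :
      ∀ P : V × V → Prop, ∀ [DecidablePred P], ∀ a ∈ A.filter P, x a = 0 ∨ x a = 1 :=
    fun _ _ a ha => hx a (Finset.mem_filter.1 ha).1
  have hrT : ∀ i, (i, r) ∉ T := fun i hi => hr i hi.1
  have hin : ∀ i i' j, (i, j) ∈ T → (i', j) ∈ T → i = i' := by
    intro i i' j hi hi'
    have hj : j ≠ r := by rintro rfl; exact hrT i hi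
    exact congrArg Prod.fst <| Finset.eq_of_eq_one_of_sum_eq_one (hx_filter _) (hdeg j hj)
      (Finset.mem_filter.2 ⟨hi.1, rfl⟩) (Finset.mem_filter.2 ⟨hi'.1, rfl⟩) hi.2 hi'.2
  have hpath : ∀ j, ∃ p, IsPathIn T r j p ∧ ∀ v ∈ p, (j, v) ∉ R := by
    intro j
    have hjj : (j, j) ∉ R := fun h => hirr _ h rfl
    rcases eq_or_ne j r with rfl | hj
    · exact ⟨[j], .singleton j, by simpa using hjj⟩
    have hjVj : j ∈ (Finset.univ.filter fun i => (j, i) ∉ R).erase r := by simp [hj, hjj]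
    obtain ⟨p, hp, hpU⟩ := exists_isPathIn_of_cut (T := T) hjVj fun S hS hjS => by
      obtain ⟨a, ha, hxa⟩ :=
        Finset.exists_eq_one_of_one_le_sum (hx_filter _) (hcut j hj S hS hjS)
      obtain ⟨haA, hcross⟩ := Finset.mem_filter.1 ha
      exact ⟨a, ⟨haA, hxa⟩, hcross⟩
    exact ⟨p, hp, fun v hv => (Finset.mem_filter.1 (hpU v hv)).2⟩
  refine ⟨⟨fun j hj => ?_, hrT, fun j => ?_⟩, fun q hq p hp hmem => ?_⟩
  · obtain ⟨a, ha, hxa⟩ := Finset.exists_eq_one_of_one_le_sum (hx_filter _) (hdeg j hj).ge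
    obtain ⟨haA, rfl⟩ := Finset.mem_filter.1 ha
    exact ⟨a.1, ⟨haA, hxa⟩, fun i hi => hin _ _ _ hi ⟨haA, hxa⟩⟩
  · obtain ⟨p, hp, -⟩ := hpath j
    exact ⟨p, hp, fun p' hp' => hp'.unique hin hrT hp⟩
  · obtain ⟨p', hp', hR⟩ := hpath q.1
    exact hR q.2 (hp.unique hin hrT hp' ▸ hmem) hq
end

section
/- In the directed graph constructed from a 3-CNF formula Φ with m clauses (vertices r, s, s', t plus one vertex per literal occurrence v_{ik}; arcs (r,s), (r,s'), (s, v_{1j}), (v_{ij}, v_{i+1,k}) for all layers, (v_{mj}, t), and (s', v_{ij}) for all i,j; precedence pairs (t,s') and (v_{hk}, v_{ij}) for h > i whenever the two literals refer to the same variable with exactly one negated), if Φ is satisfiable then there exists a spanning arborescence rooted at r in which no precedence pair (a,b) ∈ R has b on the path from r to a. -/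
/-- Vertices of the graph built from a 3-CNF formula with `m + 1` clauses:
`root`, `s`, `s'`, `t`, plus a vertex `lit i k` for the `k`-th literal of clause `i`. -/
inductive SatVert (m : ℕ) : Type
  | root | s | s' | t
  | lit (i : Fin (m + 1)) (k : Fin 3)
  deriving DecidableEq

/-- Arcs of the layered graph of the reduction (Theorem 1). -/
def SatArcs (m : ℕ) : Set (SatVert m × SatVert m) :=
  {a | a = (SatVert.root, SatVert.s) ∨ a = (SatVert.root, SatVert.s') ∨
    (∃ j : Fin 3, a = (SatVert.s, SatVert.lit 0 j)) ∨
    (∃ (i : Fin m) (j k : Fin 3), a = (SatVert.lit i.castSucc j, SatVert.lit i.succ k)) ∨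
    (∃ j : Fin 3, a = (SatVert.lit (Fin.last m) j, SatVert.t)) ∨
    (∃ (i : Fin (m + 1)) (j : Fin 3), a = (SatVert.s', SatVert.lit i j))}

/-- Precedence pairs of the reduction: `(t, s')`, plus `(lit h k, lit i j)` whenever
`h > i` and the two literals refer to the same variable with exactly one negated.
Clause `i` is given by `C i : Fin 3 → ℕ × Bool` (variable index and sign). -/
def SatPrec (m : ℕ) (C : Fin (m + 1) → Fin 3 → ℕ × Bool) : Set (SatVert m × SatVert m) :=
  {a | a = (SatVert.t, SatVert.s') ∨
    ∃ (h i : Fin (m + 1)) (k j : Fin 3), (i : ℕ) < (h : ℕ) ∧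
      (C h k).1 = (C i j).1 ∧ (C h k).2 ≠ (C i j).2 ∧
      a = (SatVert.lit h k, SatVert.lit i j)}

section ParentTree

variable {V : Type*}

theorem isPathIn_singleton (T : Set (V × V)) (r : V) : IsPathIn T r r [r] :=
  ⟨rfl, rfl, List.isChain_singleton r⟩

theorem IsPathIn.append_singleton {T : Set (V × V)} {r w j : V} {q : List V}
    (hq : IsPathIn T r w q) (hwj : (w, j) ∈ T) : IsPathIn T r j (q ++ [j]) := by
  obtain ⟨hhead, hlast, hchain⟩ := hq
  refine ⟨?_, by simp, List.isChain_append.2 ⟨hchain, List.isChain_singleton j, ?_⟩⟩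
  · rw [List.head?_append, hhead]; rfl
  · intro x hx y hy
    rw [hlast] at hx
    cases hx
    cases hy
    exact hwj

theorem IsPathIn.eq_singleton_or_exists_append {T : Set (V × V)} {r j : V} {p : List V}
    (hp : IsPathIn T r j p) :
    (j = r ∧ p = [r]) ∨ ∃ q w, IsPathIn T r w q ∧ (w, j) ∈ T ∧ p = q ++ [j] := by
  obtain ⟨hhead, hlast, hchain⟩ := hp
  rcases p.eq_nil_or_concat with rfl | ⟨q, a, rfl⟩
  · simp at hhead
  rw [List.concat_eq_append, List.getLast?_concat, Option.some.injEq] at hlast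
  subst hlast
  rcases q.eq_nil_or_concat with rfl | ⟨q, w, rfl⟩
  · simp only [List.concat_eq_append, List.nil_append, List.head?_cons,
      Option.some.injEq] at hhead
    exact Or.inl ⟨hhead, by rw [hhead, List.concat_eq_append, List.nil_append]⟩
  · simp only [List.concat_eq_append] at hhead hchain ⊢
    obtain ⟨hcq, -, hstep⟩ := List.isChain_append.1 hchain
    refine Or.inr ⟨q ++ [w], w, ⟨?_, by simp, hcq⟩, hstep w (by simp) _ rfl, rfl⟩
    rwa [List.head?_append_of_ne_nil _ (by simp)] at hhead

theorem IsPathIn.unique_s7 {T : Set (V × V)} {r j : V} {p p' : List V}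
    (hin : ∀ a b c, (a, c) ∈ T → (b, c) ∈ T → a = b) (hr : ∀ a, (a, r) ∉ T)
    (hp : IsPathIn T r j p) (hp' : IsPathIn T r j p') : p = p' := by
  induction p using List.reverseRecOn generalizing j p' with
  | nil => simp [IsPathIn] at hp
  | append_singleton q a ih =>
    rcases hp.eq_singleton_or_exists_append with ⟨rfl, h⟩ | ⟨q₁, w, hq₁, hw, h⟩
    · rcases hp'.eq_singleton_or_exists_append with ⟨-, h'⟩ | ⟨-, w', -, hw', -⟩
      · rw [h, h']
      · exact absurd hw' (hr w')
    · rcases hp'.eq_singleton_or_exists_append with ⟨rfl, -⟩ | ⟨q₂, w', hq₂, hw', h'⟩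
      · exact absurd hw (hr w)
      · obtain ⟨rfl, -⟩ := List.append_inj' h rfl
        obtain rfl := hin _ _ _ hw hw'
        rw [h, h', ih hq₁ hq₂]

theorem IsPathIn.forall_mem {T : Set (V × V)} {r j : V} {p : List V} (P : V → Prop)
    (hP : ∀ a b, (a, b) ∈ T → P b → P a) (hp : IsPathIn T r j p) (hj : P j) :
    ∀ x ∈ p, P x := by
  induction p using List.reverseRecOn generalizing j with
  | nil => simp [IsPathIn] at hp
  | append_singleton q a ih =>
    rcases hp.eq_singleton_or_exists_append with ⟨rfl, h⟩ | ⟨q₁, w, hq₁, hw, h⟩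
    · rw [h]
      simpa using hj
    · obtain ⟨rfl, h⟩ := List.append_inj' h rfl
      rw [h]
      simp only [List.mem_append, List.mem_singleton]
      rintro x (hx | rfl)
      exacts [ih hq₁ (hP _ _ hw hj) x hx, hj]

def parentTree (r : V) (par : V → V) : Set (V × V) :=
  {a | a.2 ≠ r ∧ a.1 = par a.2}

theorem exists_isPathIn_parentTree {r : V} {par : V → V} (rank : V → ℕ)
    (hrank : ∀ v, v ≠ r → rank (par v) < rank v) (j : V) :
    ∃ p, IsPathIn (parentTree r par) r j p := by
  induction hn : rank j using Nat.strong_induction_on generalizing j with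
  | _ n ih =>
  by_cases hj : j = r
  · subst hj
    exact ⟨[j], isPathIn_singleton _ j⟩
  · obtain ⟨q, hq⟩ := ih _ (hn ▸ hrank j hj) (par j) rfl
    exact ⟨q ++ [j], hq.append_singleton ⟨hj, rfl⟩⟩

theorem isSpanningArborescence_parentTree {r : V} {par : V → V} (rank : V → ℕ)
    (hrank : ∀ v, v ≠ r → rank (par v) < rank v) :
    IsSpanningArborescence (parentTree r par) r := by
  refine ⟨fun j hj => ⟨par j, ⟨hj, rfl⟩, fun i hi => hi.2⟩, fun i hi => hi.1 rfl, fun j => ?_⟩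
  obtain ⟨p, hp⟩ := exists_isPathIn_parentTree rank hrank j
  exact ⟨p, hp, fun p' hp' =>
    hp'.unique_s7 (fun a b c ha hb => ha.2.trans hb.2.symm) (fun a ha => ha.1 rfl) hp⟩

theorem IsPathIn.forall_mem_of_parentTree {r : V} {par : V → V} {j : V} {p : List V}
    (P : V → Prop) (hP : ∀ v, v ≠ r → P v → P (par v))
    (hp : IsPathIn (parentTree r par) r j p) (hj : P j) : ∀ x ∈ p, P x :=
  hp.forall_mem P (fun a b hab hPb => by
    obtain ⟨hb, rfl⟩ : b ≠ r ∧ a = par b := hab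
    exact hP b hb hPb) hj

end ParentTree

namespace SatVert

variable {m : ℕ} (k : Fin (m + 1) → Fin 3)

def prevLayer (i : Fin (m + 1)) : SatVert m :=
  Fin.cases s (fun i => lit i.castSucc (k i.castSucc)) i

def parent : SatVert m → SatVert m
  | root | s | s' => root
  | t => lit (Fin.last m) (k (Fin.last m))
  | lit i j => if j = k i then prevLayer k i else s'

def depth : SatVert m → ℕ
  | root => 0
  | s | s' => 1
  | t => m + 3
  | lit i j => if j = k i then i + 2 else 2

theorem depth_parent_lt (v : SatVert m) (hv : v ≠ root) : depth k (parent k v) < depth k v := by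
  cases v with
  | root => exact absurd rfl hv
  | lit i j =>
    by_cases hj : j = k i
    · cases i using Fin.cases <;> simp [parent, prevLayer, depth, hj]
    · simp [parent, depth, hj]
  | _ => simp [parent, depth]

theorem parentTree_subset_satArcs : parentTree root (parent k) ⊆ SatArcs m := by
  rintro ⟨a, b⟩ ⟨hb, hab⟩
  obtain rfl : a = parent k b := hab
  cases b with
  | root => exact absurd rfl hb
  | s => exact Or.inl rfl
  | s' => exact Or.inr (Or.inl rfl)
  | t => exact Or.inr (Or.inr (Or.inr (Or.inr (Or.inl ⟨_, rfl⟩))))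
  | lit i j =>
    by_cases hj : j = k i
    · cases i using Fin.cases with
      | zero => exact Or.inr (Or.inr (Or.inl ⟨j, by simp [parent, prevLayer, hj]⟩))
      | succ i =>
        refine Or.inr (Or.inr (Or.inr (Or.inl ⟨i, k i.castSucc, j, ?_⟩)))
        simp [parent, prevLayer, hj]
    · exact Or.inr (Or.inr (Or.inr (Or.inr (Or.inr ⟨i, j, by simp [parent, hj]⟩))))

def IsSelected : SatVert m → Prop
  | s' => False
  | lit i j => j = k i
  | _ => True

theorem isSelected_parent (v : SatVert m) (hv : IsSelected k v) : IsSelected k (parent k v) := by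
  cases v with
  | s' => exact hv.elim
  | lit i j =>
    cases i using Fin.cases <;> simp_all [IsSelected, parent, prevLayer]
  | _ => simp [IsSelected, parent]

theorem eq_of_mem_of_isPathIn_lit_of_ne {j : Fin 3} {i : Fin (m + 1)} (hj : j ≠ k i)
    {p : List (SatVert m)} (hp : IsPathIn (parentTree root (parent k)) root (lit i j) p) :
    ∀ x ∈ p, x = lit i j ∨ x = s' ∨ x = root := by
  refine hp.forall_mem_of_parentTree _ ?_ (Or.inl rfl)
  rintro v hv (rfl | rfl | rfl)
  · simp [parent, hj]
  · simp [parent]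
  · exact absurd rfl hv

theorem not_mem_of_isPathIn_of_mem_satPrec {C : Fin (m + 1) → Fin 3 → ℕ × Bool} {σ : ℕ → Bool}
    (hk : ∀ i, σ (C i (k i)).1 = (C i (k i)).2) {a b : SatVert m} (hab : (a, b) ∈ SatPrec m C)
    {p : List (SatVert m)} (hp : IsPathIn (parentTree root (parent k)) root a p) : b ∉ p := by
  have selected : IsSelected k a → ∀ x ∈ p, IsSelected k x :=
    hp.forall_mem_of_parentTree _ fun v _ => isSelected_parent k v
  intro hb
  rcases hab with hab | ⟨h, i, kh, j, hlt, hvar, hsign, hab⟩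
  · obtain ⟨rfl, rfl⟩ := Prod.mk.inj hab
    exact selected trivial s' hb
  · obtain ⟨rfl, rfl⟩ := Prod.mk.inj hab
    by_cases hkh : kh = k h
    · subst hkh
      obtain rfl : j = k i := selected rfl _ hb
      exact hsign (by rw [← hk h, hvar, hk i])
    · rcases eq_of_mem_of_isPathIn_lit_of_ne k hkh hp _ hb with heq | heq | heq
      · obtain ⟨rfl, -⟩ := lit.inj heq
        exact lt_irrefl _ hlt
      all_goals cases heq

end SatVert

/-- if the 3-CNF formula is satisfiable, then the constructed graph
admits a spanning arborescence rooted at `root` in which no precedence pair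
`(a,b) ∈ R` has `b` on the path from `root` to `a`. -/
theorem stmt7 (m : ℕ) (C : Fin (m + 1) → Fin 3 → ℕ × Bool)
    (hsat : ∃ σ : ℕ → Bool, ∀ i : Fin (m + 1), ∃ k : Fin 3, σ (C i k).1 = (C i k).2) :
    ∃ T : Set (SatVert m × SatVert m), T ⊆ SatArcs m ∧
      IsSpanningArborescence T SatVert.root ∧
      ∀ q ∈ SatPrec m C, ∀ p : List (SatVert m),
        IsPathIn T SatVert.root q.1 p → q.2 ∉ p := by
  obtain ⟨σ, hσ⟩ := hsat
  choose k hk using hσ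
  exact ⟨parentTree SatVert.root (SatVert.parent k), SatVert.parentTree_subset_satArcs k,
    isSpanningArborescence_parentTree (SatVert.depth k) (SatVert.depth_parent_lt k),
    fun _ hq _ hp => SatVert.not_mem_of_isPathIn_of_mem_satPrec k hk hq hp⟩
end

section
/- In the same constructed PCMCA-WT instance, in any optimal feasible spanning arborescence: (a) no directed path starts at P_FAR and passes through a vertex of P; and (b) every leaf belonging to S has P_FAR as its parent; consequently, deleting all leaves attached through P_FAR yields a tree using only grid arcs A' whose leaves all lie in P, i.e., a feasible rectilinear Steiner arborescence, of total length at most the cost of the PCMCA-WT solution. -/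
theorem List.IsChain.eq_nil_of_append_cons {α : Type*} {R : α → α → Prop} {s t : List α} {v : α}
    (h : (s ++ v :: t).IsChain R) (hv : ∀ y, ¬ R v y) : t = [] := by
  cases t with
  | nil => rfl
  | cons y t => exact (hv y (List.isChain_append_cons_cons.mp h).2.1).elim

theorem List.IsChain.not_mem_of_append_singleton {α : Type*} {R : α → α → Prop} {s : List α}
    {v : α} (h : (s ++ [v]).IsChain R) (hv : ∀ y, ¬ R v y) : v ∉ s := by
  intro hs
  obtain ⟨s₁, s₂, rfl⟩ := List.append_of_mem hs
  simpa using List.IsChain.eq_nil_of_append_cons (t := s₂ ++ [v]) (by simpa using h) hv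

theorem isPathIn_iff {V : Type*} {T : Set (V × V)} {r j : V} {p : List V} : IsPathIn T r j p ↔
    p.head? = some r ∧ p.getLast? = some j ∧ p.IsChain (fun a b => (a, b) ∈ T) := Iff.rfl

namespace IsPathIn

variable {V : Type*} {T T₂ : Set (V × V)} {r j q v : V} {p s t : List V}

theorem mono (hT : T ⊆ T₂) (h : IsPathIn T r j p) : IsPathIn T₂ r j p :=
  ⟨h.1, h.2.1, List.IsChain.imp (fun _ _ hab => hT hab) h.2.2⟩

theorem split (h : IsPathIn T r j (s ++ q :: t)) :
    IsPathIn T r q (s ++ [q]) ∧ IsPathIn T q j (q :: t) := by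
  obtain ⟨hr, hj, hc⟩ := isPathIn_iff.mp h
  rw [List.isChain_split] at hc
  refine ⟨⟨?_, List.getLast?_concat, hc.1⟩, ⟨rfl, ?_, hc.2⟩⟩
  · cases s <;> simpa using hr
  · rwa [List.getLast?_append_cons] at hj

theorem concat (h : IsPathIn T r j p) (hjq : (j, q) ∈ T) : IsPathIn T r q (p ++ [q]) := by
  obtain ⟨hr, hj, hc⟩ := isPathIn_iff.mp h
  refine ⟨?_, List.getLast?_concat, hc.append (List.isChain_singleton q) ?_⟩
  · rwa [List.head?_append_of_ne_nil _ (by rintro rfl; simp at hr)]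
  · intro x hx y hy
    simp_all

theorem exists_pred_of_ne (h : IsPathIn T r j p) (hjr : j ≠ r) :
    ∃ s u, p = s ++ [j] ∧ IsPathIn T r u s ∧ (u, j) ∈ T := by
  obtain ⟨s, rfl⟩ := List.getLast?_eq_some_iff.mp h.2.1
  rcases List.eq_nil_or_concat s with rfl | ⟨s, u, rfl⟩
  · exact absurd (by simpa using h.1) hjr
  · rw [List.concat_eq_append, List.append_assoc, List.singleton_append] at h
    obtain ⟨hu, huj⟩ := h.split
    exact ⟨_, u, by simp, hu, List.isChain_pair.mp huj.2.2⟩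

theorem le_of_forall_le {α : Type*} [Preorder α] {f : V → α} (hf : ∀ a ∈ T, f a.1 ≤ f a.2)
    (h : IsPathIn T r j p) : f r ≤ f j := by
  obtain ⟨hr, hj, hc⟩ := isPathIn_iff.mp h
  obtain ⟨t, rfl⟩ := List.head?_eq_some_iff.mp hr
  exact hc.induction (fun x => f r ≤ f x) _ (fun x y hxy hx => hx.trans (hf (x, y) hxy))
    (fun _ => le_rfl) j (List.mem_of_getLast? hj)

theorem eq_of_mem_of_le {α : Type*} [Preorder α] {P : Set V} {f : V → α}
    (hf : ∀ a ∈ T, f a.1 ≤ f a.2) (hfP : ∀ a ∈ T, a.2 ∈ P → f a.1 < f a.2)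
    (hr : ∀ q ∈ P, f q ≤ f r) (h : IsPathIn T r j p) (hq : q ∈ p) (hqP : q ∈ P) : q = r := by
  obtain ⟨s, t, rfl⟩ := List.append_of_mem hq
  by_contra hqr
  obtain ⟨_, u, -, hu, huq⟩ := (split h).1.exists_pred_of_ne hqr
  exact (hr q hqP).not_gt ((hu.le_of_forall_le hf).trans_lt (hfP _ huq hqP))

theorem eq_of_mem_of_leaf (hv : ∀ y, (v, y) ∉ T) (h : IsPathIn T r j p) (hm : v ∈ p) :
    j = v := by
  obtain ⟨s, t, rfl⟩ := List.append_of_mem hm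
  obtain rfl := List.IsChain.eq_nil_of_append_cons h.2.2 hv
  simpa using h.2.1.symm

theorem eq_nil_of_existsUnique (hj : ∃! p, IsPathIn T r j p) (h : IsPathIn T r j (s ++ j :: t)) :
    t = [] := by
  simpa using hj.unique h h.split.1

end IsPathIn

theorem existsUnique_isPathIn_fst_ne {V : Type*} {T : Set (V × V)} {r q pf : V}
    (hpf : ∃! p, IsPathIn T r pf p) (hq : ∃! p, IsPathIn T r q p)
    (hno : ∀ v p, IsPathIn T pf v p → q ∈ p → q = pf) :
    ∃! p, IsPathIn {a | a ∈ T ∧ a.1 ≠ pf} r q p := by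
  obtain ⟨p, hp, hpu⟩ := hq
  have hchain : p.IsChain fun a b => (a, b) ∈ {a | a ∈ T ∧ a.1 ≠ pf} := by
    refine List.isChain_iff_forall_rel_of_append_cons_cons.mpr fun a b s t he => ⟨?_, ?_⟩
    · exact List.isChain_iff_forall_rel_of_append_cons_cons.mp hp.2.2 he
    · rintro (rfl : a = pf)
      subst he
      obtain rfl := hno q _ hp.split.2 (List.mem_of_getLast? hp.split.2.2.1)
      simpa using IsPathIn.eq_nil_of_existsUnique hpf hp
  exact ⟨p, ⟨hp.1, hp.2.1, hchain⟩, fun p' hp' => hpu p' (hp'.mono fun _ ha => ha.1)⟩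

section Reparent

variable {V : Type*} [DecidableEq V] {T : Finset (V × V)} {r j u v x : V} {p : List V}

def reparent (T : Finset (V × V)) (v x : V) : Finset (V × V) :=
  insert (x, v) (T.filter fun a => a.2 ≠ v)

theorem mem_reparent {a : V × V} : a ∈ reparent T v x ↔ a = (x, v) ∨ a ∈ T ∧ a.2 ≠ v := by
  simp [reparent]

theorem not_mem_reparent_of_leaf (hv : ∀ y, (v, y) ∉ T) (hxv : x ≠ v) (y : V) :
    (v, y) ∉ reparent T v x := by
  simp [mem_reparent, hv, hxv.symm]

theorem isPathIn_reparent_iff (hv : v ∉ p) :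
    IsPathIn ↑(reparent T v x) r j p ↔ IsPathIn ↑T r j p := by
  simp only [isPathIn_iff]
  refine and_congr_right fun _ => and_congr_right fun _ => List.IsChain.iff_of_mem_imp ?_
  intro a b _ hb
  have hbv : b ≠ v := by rintro rfl; exact hv hb
  simp [mem_reparent, hbv]

theorem existsUnique_isPathIn_reparent_of_ne (hv : ∀ y, (v, y) ∉ T) (hxv : x ≠ v) (hjv : j ≠ v)
    (h : ∃! p, IsPathIn ↑T r j p) : ∃! p, IsPathIn ↑(reparent T v x) r j p := by
  obtain ⟨p, hp, hpu⟩ := h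
  refine ⟨p, (isPathIn_reparent_iff fun hm => hjv (hp.eq_of_mem_of_leaf hv hm)).mpr hp,
    fun q hq => hpu q ?_⟩
  refine (isPathIn_reparent_iff fun hm => hjv ?_).mp hq
  exact hq.eq_of_mem_of_leaf (not_mem_reparent_of_leaf hv hxv) hm

theorem existsUnique_isPathIn_reparent_self (hv : ∀ y, (v, y) ∉ T) (hxv : x ≠ v) (hvr : v ≠ r)
    (h : ∃! p, IsPathIn ↑T r x p) : ∃! p, IsPathIn ↑(reparent T v x) r v p := by
  obtain ⟨p, hp, hpu⟩ := h
  have hp' : IsPathIn ↑(reparent T v x) r x p :=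
    (isPathIn_reparent_iff fun hm => hxv (hp.eq_of_mem_of_leaf hv hm)).mpr hp
  refine ⟨p ++ [v], hp'.concat (mem_reparent.mpr (.inl rfl)), fun q hq => ?_⟩
  obtain ⟨s, u, rfl, hs, huv⟩ := hq.exists_pred_of_ne hvr
  have hvs : v ∉ s := List.IsChain.not_mem_of_append_singleton hq.2.2
    (not_mem_reparent_of_leaf hv hxv)
  obtain rfl : u = x := by simpa [mem_reparent] using huv
  rw [hpu s ((isPathIn_reparent_iff hvs).mp hs)]

theorem sum_reparent_add {M : Type*} [AddCommMonoid M] (huv : (u, v) ∈ T)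
    (hpar : ∀ i, (i, v) ∈ T → i = u) (f : V × V → M) :
    ∑ a ∈ reparent T v x, f a + f (u, v) = f (x, v) + ∑ a ∈ T, f a := by
  have hfilter : T.filter (fun a => a.2 ≠ v) = T.erase (u, v) := by
    ext ⟨i, k⟩
    simp only [Finset.mem_filter, Finset.mem_erase, ne_eq, Prod.mk.injEq]
    constructor
    · rintro ⟨hik, hkv⟩; exact ⟨fun h => hkv h.2, hik⟩
    · rintro ⟨hne, hik⟩
      refine ⟨hik, fun hkv => hne ⟨?_, hkv⟩⟩
      subst hkv; exact hpar i hik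
  rw [reparent, Finset.sum_insert (by simp), add_assoc, hfilter, Finset.sum_erase_add _ _ huv]

end Reparent

section PCMCA

open Function

variable {V : Type*} {Vs P : Finset V} {r pf u v : V} {A T : Finset (V × V)}
  {c : V × V → ℝ} {d w : V → ℝ}

/-- `d` are arrival times and `w` waiting times; the precedence pairs are `(q, pf)`, `q ∈ P`. -/
structure IsPCMCASolution (Vs P : Finset V) (r pf : V) (A : Finset (V × V)) (c : V × V → ℝ)
    (T : Finset (V × V)) (d w : V → ℝ) : Prop where
  subset : T ⊆ A
  existsUnique_parent : ∀ j ∈ Vs, j ≠ r → ∃! i, (i, j) ∈ T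
  not_mem_root : ∀ i, (i, r) ∉ T
  existsUnique_path : ∀ j ∈ Vs, ∃! p, IsPathIn ↑T r j p
  time_root : d r = 0
  wait_nonneg : ∀ v, 0 ≤ w v
  time_arc : ∀ a ∈ T, d a.2 = d a.1 + c a + w a.2
  precedence : ∀ q ∈ P, d q ≤ d pf

def IsOptimalPCMCASolution (Vs P : Finset V) (r pf : V) (A : Finset (V × V)) (c : V × V → ℝ)
    (T : Finset (V × V)) (d w : V → ℝ) : Prop :=
  IsPCMCASolution Vs P r pf A c T d w ∧ ∀ T₂ d₂ w₂, IsPCMCASolution Vs P r pf A c T₂ d₂ w₂ →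
    ∑ a ∈ T, c a + ∑ v ∈ Vs, w v ≤ ∑ a ∈ T₂, c a + ∑ v ∈ Vs, w₂ v

namespace IsPCMCASolution

theorem time_le (h : IsPCMCASolution Vs P r pf A c T d w) {a : V × V} (ha : a ∈ T)
    (hc : 0 ≤ c a) : d a.1 ≤ d a.2 := by
  linarith [h.time_arc a ha, h.wait_nonneg a.2]

theorem time_lt (h : IsPCMCASolution Vs P r pf A c T d w) {a : V × V} (ha : a ∈ T)
    (hc : 0 < c a) : d a.1 < d a.2 := by
  linarith [h.time_arc a ha, h.wait_nonneg a.2]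

theorem eq_of_mem_isPathIn (h : IsPCMCASolution Vs P r pf A c T d w)
    (hc : ∀ a ∈ T, 0 ≤ c a) (hcP : ∀ a ∈ T, a.2 ∈ P → 0 < c a) {j q : V} {p : List V}
    (hp : IsPathIn ↑T pf j p) (hq : q ∈ p) (hqP : q ∈ P) : q = pf :=
  hp.eq_of_mem_of_le (P := ↑P) (fun a ha => h.time_le ha (hc a ha))
    (fun a ha haP => h.time_lt ha (hcP a ha haP)) h.precedence hq hqP

variable [DecidableEq V]

theorem reparent (h : IsPCMCASolution Vs P r pf A c T d w) (hpf : pf ∈ Vs) (hvP : v ∉ P)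
    (hvr : v ≠ r) (hvpf : v ≠ pf) (hleaf : ∀ y, (v, y) ∉ T) (hA : (pf, v) ∈ A)
    (hc : c (pf, v) = 0) :
    IsPCMCASolution Vs P r pf A c (reparent T v pf) (update d v (d pf)) (update w v 0) where
  subset a ha := by
    rcases mem_reparent.mp ha with rfl | ⟨ha, -⟩
    exacts [hA, h.subset ha]
  existsUnique_parent j hj hjr := by
    rcases eq_or_ne j v with rfl | hjv
    · exact ⟨pf, mem_reparent.mpr (.inl rfl), fun i hi => by simpa [mem_reparent] using hi⟩
    · simpa [mem_reparent, hjv] using h.existsUnique_parent j hj hjr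
  not_mem_root i := by simpa [mem_reparent, hvr.symm] using h.not_mem_root i
  existsUnique_path j hj := by
    rcases eq_or_ne j v with rfl | hjv
    · exact existsUnique_isPathIn_reparent_self hleaf hvpf.symm hvr (h.existsUnique_path pf hpf)
    · exact existsUnique_isPathIn_reparent_of_ne hleaf hvpf.symm hjv (h.existsUnique_path j hj)
  time_root := by rw [update_of_ne hvr.symm, h.time_root]
  wait_nonneg y := by
    rcases eq_or_ne y v with rfl | hyv
    · simp
    · simpa [hyv] using h.wait_nonneg y
  time_arc a ha := by
    rcases mem_reparent.mp ha with rfl | ⟨ha, hav⟩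
    · simp [hc, hvpf.symm]
    · have ha1 : a.1 ≠ v := fun h1 => hleaf a.2 (h1 ▸ ha)
      simpa [hav, ha1] using h.time_arc a ha
  precedence q hq := by
    have hqv : q ≠ v := by rintro rfl; exact hvP hq
    simpa [hqv, hvpf.symm] using h.precedence q hq

end IsPCMCASolution

namespace IsOptimalPCMCASolution

variable [DecidableEq V]

theorem cost_le_zero_of_leaf (h : IsOptimalPCMCASolution Vs P r pf A c T d w) (hpf : pf ∈ Vs)
    (hv : v ∈ Vs) (hvP : v ∉ P) (hvr : v ≠ r) (hvpf : v ≠ pf) (hleaf : ∀ y, (v, y) ∉ T)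
    (hA : (pf, v) ∈ A) (hc : c (pf, v) = 0) (huv : (u, v) ∈ T) : c (u, v) ≤ 0 := by
  have hpar : ∀ i, (i, v) ∈ T → i = u := fun i hi =>
    (h.1.existsUnique_parent v hv hvr).unique hi huv
  have hcost := sum_reparent_add (x := pf) huv hpar c
  have hwait : ∑ y ∈ Vs, update w v 0 y ≤ ∑ y ∈ Vs, w y :=
    Finset.sum_le_sum fun y _ => by
      rcases eq_or_ne y v with rfl | hyv
      · simpa using h.1.wait_nonneg y
      · simp [hyv]
  linarith [h.2 _ _ _ (h.1.reparent hpf hvP hvr hvpf hleaf hA hc)]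

theorem free_arc_mem_of_leaf (h : IsOptimalPCMCASolution Vs P r pf A c T d w) (hpf : pf ∈ Vs)
    (hrP : r ∈ P) (hpfP : pf ∈ P) (hfree : ∀ v ∈ Vs, v ∉ P → (pf, v) ∈ A ∧ c (pf, v) = 0)
    (hpos : ∀ a ∈ T, a.1 ≠ pf → 0 < c a) (hv : v ∈ Vs) (hvP : v ∉ P) (hpar : ∃ u, (u, v) ∈ T)
    (hleaf : ∀ y, (v, y) ∉ T) : (pf, v) ∈ T := by
  obtain ⟨u, huv⟩ := hpar
  by_contra hnot
  have hu : u ≠ pf := by rintro rfl; exact hnot huv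
  exact (hpos _ huv hu).not_ge (h.cost_le_zero_of_leaf hpf hv hvP (ne_of_mem_of_not_mem hrP hvP).symm
    (ne_of_mem_of_not_mem hpfP hvP).symm hleaf (hfree v hv hvP).1 (hfree v hv hvP).2 huv)

end IsOptimalPCMCASolution

theorem IsPCMCASolution.mem_of_leaf_of_fst_ne [DecidableEq V]
    (h : IsPCMCASolution Vs P r pf A c T d w) (hrP : r ∈ P) (hpfP : pf ∈ P)
    (hVs : ∀ a ∈ T, a.1 ≠ pf → a.2 ∈ Vs)
    (hfree : ∀ v ∈ Vs, v ∉ P → (∃ u, (u, v) ∈ T) → (∀ u, (v, u) ∉ T) → (pf, v) ∈ T) (v : V)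
    (hpar : ∃ u, (u, v) ∈ T.filter fun a => a.1 ≠ pf)
    (hleaf : ∀ u, (v, u) ∉ T.filter fun a => a.1 ≠ pf) : v ∈ P := by
  obtain ⟨u, hu⟩ := hpar
  rw [Finset.mem_filter] at hu
  by_contra hvP
  have hv : v ∈ Vs := hVs _ hu.1 hu.2
  have hpfv := hfree v hv hvP ⟨u, hu.1⟩ fun y hy =>
    hleaf y (Finset.mem_filter.mpr ⟨hy, (ne_of_mem_of_not_mem hpfP hvP).symm⟩)
  exact hu.2 ((h.existsUnique_parent v hv (ne_of_mem_of_not_mem hrP hvP).symm).unique hu.1 hpfv)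

end PCMCA

section RectilinearInstance

variable {P Grid : Finset (ℝ × ℝ)} {PFAR : ℝ × ℝ} {A' AFull : Finset ((ℝ × ℝ) × (ℝ × ℝ))}
  {c : (ℝ × ℝ) × (ℝ × ℝ) → ℝ} {a : (ℝ × ℝ) × (ℝ × ℝ)}

theorem rectilinear_length_pos (h : a.1 ≠ a.2) : 0 < |a.2.1 - a.1.1| + |a.2.2 - a.1.2| := by
  have hne : a.1.1 ≠ a.2.1 ∨ a.1.2 ≠ a.2.2 := by
    contrapose! h
    exact Prod.ext h.1 h.2
  rcases hne with h | h
  · exact add_pos_of_pos_of_nonneg (abs_pos.mpr (sub_ne_zero.mpr h.symm)) (abs_nonneg _)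
  · exact add_pos_of_nonneg_of_pos (abs_nonneg _) (abs_pos.mpr (sub_ne_zero.mpr h.symm))

theorem cost_nonneg (hc : ∀ a, c a = if a.1 = PFAR ∧ a.2 ∉ P then 0
      else |a.2.1 - a.1.1| + |a.2.2 - a.1.2|) (a : (ℝ × ℝ) × (ℝ × ℝ)) : 0 ≤ c a := by
  rw [hc]; split_ifs <;> positivity

theorem mem_gridArcs_of_mem
    (hAFull : AFull = A' ∪ (Grid.filter (fun v => v ∉ P)).image (fun v => (PFAR, v)))
    (ha : a ∈ AFull) (h : a.1 ≠ PFAR ∨ a.2 ∈ P) : a ∈ A' := by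
  rw [hAFull, Finset.mem_union] at ha
  refine ha.resolve_right ?_
  rintro hS
  obtain ⟨v, hv, rfl⟩ := Finset.mem_image.mp hS
  simp [(Finset.mem_filter.mp hv).2] at h

theorem snd_mem_and_cost_pos_of_mem_gridArcs
    (hA' : A' = (Grid ×ˢ Grid).filter (fun a =>
      (a.1.2 = a.2.2 ∧ a.1.1 < a.2.1 ∧ ¬ ∃ q ∈ Grid, a.1.1 < q.1 ∧ q.1 < a.2.1) ∨
      (a.1.1 = a.2.1 ∧ a.1.2 < a.2.2 ∧ ¬ ∃ q ∈ Grid, a.1.2 < q.2 ∧ q.2 < a.2.2)))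
    (hc : ∀ a, c a = if a.1 = PFAR ∧ a.2 ∉ P then 0
      else |a.2.1 - a.1.1| + |a.2.2 - a.1.2|)
    (ha : a ∈ A') (h : a.1 ≠ PFAR ∨ a.2 ∈ P) : a.2 ∈ Grid ∧ 0 < c a := by
  rw [hA', Finset.mem_filter, Finset.mem_product] at ha
  refine ⟨ha.1.2, ?_⟩
  have hne : a.1 ≠ a.2 := by
    intro heq
    rcases ha.2 with ⟨-, hlt, -⟩ | ⟨-, hlt, -⟩ <;> simp [heq] at hlt
  rw [hc, if_neg (by tauto)]
  exact rectilinear_length_pos hne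

theorem sum_filter_rectilinear_length_le
    (hc : ∀ a, c a = if a.1 = PFAR ∧ a.2 ∉ P then 0
      else |a.2.1 - a.1.1| + |a.2.2 - a.1.2|)
    {w : ℝ × ℝ → ℝ} (hw : ∀ v, 0 ≤ w v) (T : Finset ((ℝ × ℝ) × (ℝ × ℝ))) :
    ∑ a ∈ T.filter (fun a => a.1 ≠ PFAR), (|a.2.1 - a.1.1| + |a.2.2 - a.1.2|) ≤
      ∑ a ∈ T, c a + ∑ v ∈ Grid, w v :=
  calc ∑ a ∈ T.filter (fun a => a.1 ≠ PFAR), (|a.2.1 - a.1.1| + |a.2.2 - a.1.2|)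
      = ∑ a ∈ T.filter (fun a => a.1 ≠ PFAR), c a :=
        Finset.sum_congr rfl fun a ha => by rw [hc, if_neg fun h => (Finset.mem_filter.mp ha).2 h.1]
    _ ≤ ∑ a ∈ T, c a :=
        Finset.sum_le_sum_of_subset_of_nonneg (Finset.filter_subset _ _)
          fun a _ _ => cost_nonneg hc a
    _ ≤ _ := le_add_of_nonneg_right (Finset.sum_nonneg fun v _ => hw v)

end RectilinearInstance

theorem stmt11_general (P : Finset (ℝ × ℝ)) (h0 : ((0 : ℝ), (0 : ℝ)) ∈ P)
    (PFAR : ℝ × ℝ) (hPF : PFAR ∈ P)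
    (Grid : Finset (ℝ × ℝ))
    (hGrid : Grid = (P.image Prod.fst) ×ˢ (P.image Prod.snd))
    (A' : Finset ((ℝ × ℝ) × (ℝ × ℝ)))
    (hA' : A' = (Grid ×ˢ Grid).filter (fun a =>
      (a.1.2 = a.2.2 ∧ a.1.1 < a.2.1 ∧ ¬ ∃ q ∈ Grid, a.1.1 < q.1 ∧ q.1 < a.2.1) ∨
      (a.1.1 = a.2.1 ∧ a.1.2 < a.2.2 ∧ ¬ ∃ q ∈ Grid, a.1.2 < q.2 ∧ q.2 < a.2.2)))
    (AFull : Finset ((ℝ × ℝ) × (ℝ × ℝ)))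
    (hAFull : AFull = A' ∪ (Grid.filter (fun v => v ∉ P)).image (fun v => (PFAR, v)))
    (c : (ℝ × ℝ) × (ℝ × ℝ) → ℝ)
    (hc : ∀ a, c a = if a.1 = PFAR ∧ a.2 ∉ P then 0
      else |a.2.1 - a.1.1| + |a.2.2 - a.1.2|)
    -- the feasible solution (T', d, w)
    (T' : Finset ((ℝ × ℝ) × (ℝ × ℝ))) (d w : ℝ × ℝ → ℝ)
    (hT'A : T' ⊆ AFull)
    (hdeg : ∀ j ∈ Grid, j ≠ ((0 : ℝ), (0 : ℝ)) → ∃! i : ℝ × ℝ, (i, j) ∈ T')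
    (hroot : ∀ i : ℝ × ℝ, (i, ((0 : ℝ), (0 : ℝ))) ∉ T')
    (hpaths : ∀ j ∈ Grid, ∃! p : List (ℝ × ℝ), IsPathIn (↑T') ((0 : ℝ), (0 : ℝ)) j p)
    (hd0 : d ((0 : ℝ), (0 : ℝ)) = 0)
    (hw0 : ∀ v, 0 ≤ w v)
    (htime : ∀ a ∈ T', d a.2 = d a.1 + c a + w a.2)
    (hprec : ∀ q ∈ P, d q ≤ d PFAR)
    -- optimality
    (hopt : ∀ (T2 : Finset ((ℝ × ℝ) × (ℝ × ℝ))) (d2 w2 : ℝ × ℝ → ℝ),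
      T2 ⊆ AFull →
      (∀ j ∈ Grid, j ≠ ((0 : ℝ), (0 : ℝ)) → ∃! i : ℝ × ℝ, (i, j) ∈ T2) →
      (∀ i : ℝ × ℝ, (i, ((0 : ℝ), (0 : ℝ))) ∉ T2) →
      (∀ j ∈ Grid, ∃! p : List (ℝ × ℝ), IsPathIn (↑T2) ((0 : ℝ), (0 : ℝ)) j p) →
      d2 ((0 : ℝ), (0 : ℝ)) = 0 → (∀ v, 0 ≤ w2 v) →
      (∀ a ∈ T2, d2 a.2 = d2 a.1 + c a + w2 a.2) →
      (∀ q ∈ P, d2 q ≤ d2 PFAR) →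
      ∑ a ∈ T', c a + ∑ v ∈ Grid, w v ≤ ∑ a ∈ T2, c a + ∑ v ∈ Grid, w2 v) :
    -- (a)
    (∀ (v : ℝ × ℝ) (p : List (ℝ × ℝ)), IsPathIn (↑T') PFAR v p →
      ∀ q ∈ p, q ∈ P → q = PFAR) ∧
    -- (b)
    (∀ v ∈ Grid, v ∉ P → (∃ u, (u, v) ∈ T') → (∀ u, (v, u) ∉ T') → (PFAR, v) ∈ T') ∧
    -- consequence: the pruned tree is a feasible RSA of length ≤ the objective
    ((T'.filter (fun a => a.1 ≠ PFAR)) ⊆ A' ∧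
      (∀ q ∈ P, ∃! p : List (ℝ × ℝ),
        IsPathIn (↑(T'.filter (fun a => a.1 ≠ PFAR))) ((0 : ℝ), (0 : ℝ)) q p) ∧
      (∀ v : ℝ × ℝ, (∃ u, (u, v) ∈ T'.filter (fun a => a.1 ≠ PFAR)) →
        (∀ u, (v, u) ∉ T'.filter (fun a => a.1 ≠ PFAR)) → v ∈ P) ∧
      ∑ a ∈ T'.filter (fun a => a.1 ≠ PFAR), (|a.2.1 - a.1.1| + |a.2.2 - a.1.2|) ≤
        ∑ a ∈ T', c a + ∑ v ∈ Grid, w v) := by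
  have hT : IsPCMCASolution Grid P (0, 0) PFAR AFull c T' d w :=
    ⟨hT'A, hdeg, hroot, hpaths, hd0, hw0, htime, hprec⟩
  have hT_opt : IsOptimalPCMCASolution Grid P (0, 0) PFAR AFull c T' d w :=
    ⟨hT, fun T₂ d₂ w₂ h₂ => hopt T₂ d₂ w₂ h₂.1 h₂.2 h₂.3 h₂.4 h₂.5 h₂.6 h₂.7 h₂.8⟩
  have hPGrid : P ⊆ Grid := hGrid ▸ Finset.subset_product
  have hgrid : ∀ a ∈ T', a.1 ≠ PFAR ∨ a.2 ∈ P → a ∈ A' ∧ a.2 ∈ Grid ∧ 0 < c a :=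
    fun a ha h => have hA := mem_gridArcs_of_mem hAFull (hT'A ha) h
      ⟨hA, snd_mem_and_cost_pos_of_mem_gridArcs hA' hc hA h⟩
  have partA : ∀ (v : ℝ × ℝ) (p : List (ℝ × ℝ)), IsPathIn (↑T') PFAR v p →
      ∀ q ∈ p, q ∈ P → q = PFAR := fun v p hp q hq hqP =>
    hT.eq_of_mem_isPathIn (fun a _ => cost_nonneg hc a)
      (fun a ha haP => (hgrid a ha (.inr haP)).2.2) hp hq hqP
  have partB : ∀ v ∈ Grid, v ∉ P → (∃ u, (u, v) ∈ T') → (∀ u, (v, u) ∉ T') →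
      (PFAR, v) ∈ T' := fun v hv hvP =>
    hT_opt.free_arc_mem_of_leaf (hPGrid hPF) h0 hPF (fun v hv hvP => ⟨hAFull ▸
      Finset.mem_union_right _ (Finset.mem_image_of_mem _ (Finset.mem_filter.mpr ⟨hv, hvP⟩)),
      by rw [hc]; simp [hvP]⟩) (fun a ha hne => (hgrid a ha (.inl hne)).2.2) hv hvP
  refine ⟨partA, partB, fun a ha => ?_, fun q hq => ?_,
    hT.mem_of_leaf_of_fst_ne h0 hPF (fun a ha hne => (hgrid a ha (.inl hne)).2.1) partB,
    sum_filter_rectilinear_length_le hc hw0 T'⟩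
  · rw [Finset.mem_filter] at ha
    exact (hgrid a ha.1 (.inl ha.2)).1
  · rw [Finset.coe_filter]
    exact existsUnique_isPathIn_fst_ne (hpaths PFAR (hPGrid hPF)) (hpaths q (hPGrid hq))
      fun v p hp hqp => partA v p hp q hqp hq

/-- converse direction of the RSA → PCMCA-WT reduction: in any
optimal feasible solution `(T', d, w)` of the constructed PCMCA-WT instance:
(a) no directed path starting at `P_FAR` passes through a vertex of `P` other than
`P_FAR` itself; (b) every leaf of `T'` that is a Steiner vertex has `P_FAR` as its
parent; consequently deleting the arcs leaving `P_FAR` yields a tree using only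
grid arcs, spanning `P`, whose leaves all lie in `P` — a feasible rectilinear
Steiner arborescence of total length at most the PCMCA-WT objective value. -/
theorem stmt11 (P : Finset (ℝ × ℝ)) (h0 : ((0 : ℝ), (0 : ℝ)) ∈ P)
    (hQ : ∀ q ∈ P, 0 ≤ q.1 ∧ 0 ≤ q.2)
    (PFAR : ℝ × ℝ) (hPF : PFAR ∈ P)
    (hFar : ∀ q ∈ P, q.1 + q.2 ≤ PFAR.1 + PFAR.2)
    (Grid : Finset (ℝ × ℝ))
    (hGrid : Grid = (P.image Prod.fst) ×ˢ (P.image Prod.snd))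
    (A' : Finset ((ℝ × ℝ) × (ℝ × ℝ)))
    (hA' : A' = (Grid ×ˢ Grid).filter (fun a =>
      (a.1.2 = a.2.2 ∧ a.1.1 < a.2.1 ∧ ¬ ∃ q ∈ Grid, a.1.1 < q.1 ∧ q.1 < a.2.1) ∨
      (a.1.1 = a.2.1 ∧ a.1.2 < a.2.2 ∧ ¬ ∃ q ∈ Grid, a.1.2 < q.2 ∧ q.2 < a.2.2)))
    (AFull : Finset ((ℝ × ℝ) × (ℝ × ℝ)))
    (hAFull : AFull = A' ∪ (Grid.filter (fun v => v ∉ P)).image (fun v => (PFAR, v)))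
    (c : (ℝ × ℝ) × (ℝ × ℝ) → ℝ)
    (hc : ∀ a, c a = if a.1 = PFAR ∧ a.2 ∉ P then 0
      else |a.2.1 - a.1.1| + |a.2.2 - a.1.2|)
    -- the feasible solution (T', d, w)
    (T' : Finset ((ℝ × ℝ) × (ℝ × ℝ))) (d w : ℝ × ℝ → ℝ)
    (hT'A : T' ⊆ AFull)
    (hdeg : ∀ j ∈ Grid, j ≠ ((0 : ℝ), (0 : ℝ)) → ∃! i : ℝ × ℝ, (i, j) ∈ T')
    (hroot : ∀ i : ℝ × ℝ, (i, ((0 : ℝ), (0 : ℝ))) ∉ T')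
    (hpaths : ∀ j ∈ Grid, ∃! p : List (ℝ × ℝ), IsPathIn (↑T') ((0 : ℝ), (0 : ℝ)) j p)
    (hd0 : d ((0 : ℝ), (0 : ℝ)) = 0)
    (hw0 : ∀ v, 0 ≤ w v)
    (htime : ∀ a ∈ T', d a.2 = d a.1 + c a + w a.2)
    (hprec : ∀ q ∈ P, d q ≤ d PFAR)
    -- optimality
    (hopt : ∀ (T2 : Finset ((ℝ × ℝ) × (ℝ × ℝ))) (d2 w2 : ℝ × ℝ → ℝ),
      T2 ⊆ AFull →
      (∀ j ∈ Grid, j ≠ ((0 : ℝ), (0 : ℝ)) → ∃! i : ℝ × ℝ, (i, j) ∈ T2) →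
      (∀ i : ℝ × ℝ, (i, ((0 : ℝ), (0 : ℝ))) ∉ T2) →
      (∀ j ∈ Grid, ∃! p : List (ℝ × ℝ), IsPathIn (↑T2) ((0 : ℝ), (0 : ℝ)) j p) →
      d2 ((0 : ℝ), (0 : ℝ)) = 0 → (∀ v, 0 ≤ w2 v) →
      (∀ a ∈ T2, d2 a.2 = d2 a.1 + c a + w2 a.2) →
      (∀ q ∈ P, d2 q ≤ d2 PFAR) →
      ∑ a ∈ T', c a + ∑ v ∈ Grid, w v ≤ ∑ a ∈ T2, c a + ∑ v ∈ Grid, w2 v) :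
    -- (a)
    (∀ (v : ℝ × ℝ) (p : List (ℝ × ℝ)), IsPathIn (↑T') PFAR v p →
      ∀ q ∈ p, q ∈ P → q = PFAR) ∧
    -- (b)
    (∀ v ∈ Grid, v ∉ P → (∃ u, (u, v) ∈ T') → (∀ u, (v, u) ∉ T') → (PFAR, v) ∈ T') ∧
    -- consequence: the pruned tree is a feasible RSA of length ≤ the objective
    ((T'.filter (fun a => a.1 ≠ PFAR)) ⊆ A' ∧
      (∀ q ∈ P, ∃! p : List (ℝ × ℝ),
        IsPathIn (↑(T'.filter (fun a => a.1 ≠ PFAR))) ((0 : ℝ), (0 : ℝ)) q p) ∧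
      (∀ v : ℝ × ℝ, (∃ u, (u, v) ∈ T'.filter (fun a => a.1 ≠ PFAR)) →
        (∀ u, (v, u) ∉ T'.filter (fun a => a.1 ≠ PFAR)) → v ∈ P) ∧
      ∑ a ∈ T'.filter (fun a => a.1 ≠ PFAR), (|a.2.1 - a.1.1| + |a.2.2 - a.1.2|) ≤
        ∑ a ∈ T', c a + ∑ v ∈ Grid, w v) :=
  stmt11_general P h0 PFAR hPF Grid hGrid A' hA' AFull hAFull c hc T' d w hT'A hdeg hroot hpaths hd0
    hw0 htime hprec hopt
end

section
/- Let T be a spanning arborescence of G=(V,A) rooted at r and let (s,t) ∈ R with t lying on the unique path from r to s in T. Then the inequality ∑_{(i,k)∈A : i∈V_s∖S, k∈S} x(i,k) ≥ 1 is violated by the indicator x of T for the set S consisting of all vertices on the subpath of T from t to s (inclusive) intersected with V_s, where V_s = {i : (s,i) ∉ R}; in particular the indicator of any precedence-violating arborescence fails some constraint (3). -/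
/-!
Every vertex of `p` after `t` has its predecessor on `p` in the suffix `p.drop (p.idxOf t)`, and
that predecessor is its unique parent in the arborescence. Since `t ∉ V_s`, this covers every
vertex of `S`: hence `r ∉ S` (the root has no parent), and no tree arc enters `S` from `V_s ∖ S`,
so the cut sum is `0`.
-/

theorem List.IsChain.exists_mem_rel_of_mem_tail {α : Type*} {R : α → α → Prop} :
    ∀ {l : List α}, l.IsChain R → ∀ {b : α}, b ∈ l.tail → ∃ a ∈ l, R a b
  | [], _, _, hb | [_], _, _, hb => by simp at hb
  | a :: c :: l, hl, b, hb => by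
    rw [List.isChain_cons_cons] at hl
    obtain rfl | hb := List.mem_cons.mp hb
    · exact ⟨a, List.mem_cons_self, hl.1⟩
    · obtain ⟨a', ha', hR⟩ := hl.2.exists_mem_rel_of_mem_tail hb
      exact ⟨a', List.mem_cons_of_mem a ha', hR⟩

namespace IsPathIn

variable {V : Type*} [DecidableEq V] {T : Set (V × V)} {r s t : V} {p : List V}

theorem mem_drop_idxOf (hp : IsPathIn T r s p) (ht : t ∈ p) : s ∈ p.drop (p.idxOf t) := by
  have hlt : p.idxOf t < p.length := List.idxOf_lt_length_iff.mpr ht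
  apply List.mem_of_getLast?
  rw [List.getLast?_drop, if_neg (by omega)]
  exact hp.2.1

theorem exists_mem_drop_idxOf_parent (hp : IsPathIn T r s p) (ht : t ∈ p) {k : V}
    (hk : k ∈ p.drop (p.idxOf t)) (hkt : k ≠ t) :
    ∃ j ∈ p.drop (p.idxOf t), (j, k) ∈ T := by
  have hlt : p.idxOf t < p.length := List.idxOf_lt_length_iff.mpr ht
  have hcons : p.drop (p.idxOf t) = t :: p.drop (p.idxOf t + 1) := by
    rw [List.drop_eq_getElem_cons hlt, List.getElem_idxOf]
  have hchain : (p.drop (p.idxOf t)).IsChain (fun a b => (a, b) ∈ T) :=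
    List.IsChain.drop hp.2.2 _
  rw [hcons, List.mem_cons, or_iff_right hkt] at hk
  rw [hcons] at hchain ⊢
  exact hchain.exists_mem_rel_of_mem_tail hk

theorem parent_mem_drop_idxOf (hp : IsPathIn T r s p) (harb : IsSpanningArborescence T r)
    (ht : t ∈ p) {i k : V} (hik : (i, k) ∈ T) (hk : k ∈ p.drop (p.idxOf t)) (hkt : k ≠ t) :
    i ∈ p.drop (p.idxOf t) := by
  obtain ⟨j, hj, hjk⟩ := hp.exists_mem_drop_idxOf_parent ht hk hkt
  have hkr : k ≠ r := by
    rintro rfl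
    exact harb.2.1 i hik
  obtain ⟨u, -, hu⟩ := harb.1 k hkr
  rwa [hu i hik, ← hu j hjk]

end IsPathIn

theorem stmt15_general {V : Type*} [Fintype V] [DecidableEq V]
    (A T : Finset (V × V)) (R : Finset (V × V)) (r : V)
    (harb : IsSpanningArborescence (↑T) r)
    (hirr : ∀ q ∈ R, q.1 ≠ q.2)
    (s t : V) (hst : (s, t) ∈ R)
    (p : List V) (hp : IsPathIn (↑T) r s p) (htp : t ∈ p) :
    ∃ S : Finset V,
      S = (p.drop (p.idxOf t)).toFinset ∩ Finset.univ.filter (fun i => (s, i) ∉ R) ∧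
      S ⊆ (Finset.univ.filter (fun i => (s, i) ∉ R)).erase r ∧ s ∈ S ∧
      ∑ a ∈ A.filter (fun a =>
          a.1 ∈ Finset.univ.filter (fun i => (s, i) ∉ R) ∧ a.1 ∉ S ∧ a.2 ∈ S),
        (if a ∈ T then (1 : ℝ) else 0) < 1 := by
  have hne_t : ∀ {k : V}, (s, k) ∉ R → k ≠ t := by
    rintro k hk rfl
    exact hk hst
  refine ⟨_, rfl, fun k hk => ?_, ?_, ?_⟩
  · simp only [Finset.mem_inter, List.mem_toFinset, Finset.mem_filter, Finset.mem_univ,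
      true_and] at hk
    refine Finset.mem_erase.mpr ⟨?_, by simpa using hk.2⟩
    rintro rfl
    obtain ⟨j, -, hj⟩ := hp.exists_mem_drop_idxOf_parent htp hk.1 (hne_t hk.2)
    exact harb.2.1 j hj
  · simpa using ⟨hp.mem_drop_idxOf htp, fun h => hirr _ h rfl⟩
  · refine (Finset.sum_eq_zero ?_).trans_lt zero_lt_one
    rintro ⟨i, k⟩ ha
    simp only [Finset.mem_filter, Finset.mem_inter, List.mem_toFinset, Finset.mem_univ,
      true_and] at ha
    obtain ⟨-, hi, hiS, hk, hkR⟩ := ha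
    refine if_neg fun hik => hiS ⟨?_, hi⟩
    exact hp.parent_mem_drop_idxOf harb htp hik hk (hne_t hkR)

/-- if the spanning arborescence `T` violates the precedence
`(s,t) ∈ R` (i.e. `t` lies on the unique path `p` from `r` to `s`), then the
indicator of `T` violates the connectivity inequality (3) for the set `S`
consisting of the vertices of the subpath of `p` from `t` to `s` (inclusive)
intersected with `V_s`: the corresponding cut sum is `0 < 1`. -/
theorem stmt15 {V : Type*} [Fintype V] [DecidableEq V]
    (A T : Finset (V × V)) (R : Finset (V × V)) (r : V)
    (hT : T ⊆ A) (hr : ∀ i : V, (i, r) ∉ A)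
    (harb : IsSpanningArborescence (↑T) r)
    (hirr : ∀ q ∈ R, q.1 ≠ q.2)
    (s t : V) (hst : (s, t) ∈ R)
    (p : List V) (hp : IsPathIn (↑T) r s p) (htp : t ∈ p) :
    ∃ S : Finset V,
      S = (p.drop (p.idxOf t)).toFinset ∩ Finset.univ.filter (fun i => (s, i) ∉ R) ∧
      S ⊆ (Finset.univ.filter (fun i => (s, i) ∉ R)).erase r ∧ s ∈ S ∧
      ∑ a ∈ A.filter (fun a =>
          a.1 ∈ Finset.univ.filter (fun i => (s, i) ∉ R) ∧ a.1 ∉ S ∧ a.2 ∈ S),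
        (if a ∈ T then (1 : ℝ) else 0) < 1 :=
  stmt15_general A T R r harb hirr s t hst p hp htp
end
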